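/- There exist g ∈ ℤ⁺ and a constant c > 0 such that for infinitely many n there is a DAG G on n nodes for which, with unbounded fast memory (r ≥ n): OPT_IO^(1) = 0 while OPT_IO^(2) ≥ c·n; i.e., every minimum-cost 1-processor pebbling uses no I/O moves, yet every minimum-cost 2-processor pebbling uses at least c·n I/O moves. -/

import Mathlib

/-!
The witness is the zipper: two chains of length `9T` on `n = 18T` nodes, cut into blocks of nine
positions, where both nodes at the start of a block depend on both nodes at the end of the
previous block.

With one processor every node has to be computed and a compute move computes a single node, so
every pebbling costs at least `n`; computing the nodes in order attains this without any I/O.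

With two processors, computing both chains in lockstep and exchanging the two block ends through
slow memory costs `9T + 2(T - 1)`. Conversely, two nodes first computed by the same move are
incomparable, so they lie on the two chains of one block `t`, and different processors compute
them. A processor has computed every ancestor of a node it computes that is reachable without
passing through a loaded node; so unless a node of block `t - 1` or `t` is loaded, both
processors computed all of block `t - 1`. Duplicated work costs compute moves, hence every
pebbling of cost at most `11T - 2` makes `Ω(T)` I/O moves.
-/

open scoped Classical

/-- A relation is a DAG edge relation if its transitive closure is irreflexive
(i.e., the directed graph is acyclic). -/
def IsDag {V : Type*} (E : V → V → Prop) : Prop := Irreflexive (Relation.TransGen E)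

namespace MPP

variable {V : Type*} [DecidableEq V] {k : ℕ}

/-- A configuration of multiprocessor red-blue pebbling: a set of red pebbles
for each of the `k` processors, and a set of blue pebbles. -/
structure Conf (V : Type*) (k : ℕ) where
  red : Fin k → Finset V
  blue : Finset V

/-- Moves of multiprocessor red-blue pebbling. `save`/`load` are the parallel I/O
moves (R1-M)/(R2-M), `compute` is (R3-M), and the removals are (R4-M). -/
inductive Move (V : Type*) (k : ℕ) where
  | save (m : ℕ) (f : Fin m → Fin k) (v : Fin m → V)
  | load (m : ℕ) (f : Fin m → Fin k) (v : Fin m → V)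
  | compute (m : ℕ) (f : Fin m → Fin k) (v : Fin m → V)
  | removeRed (j : Fin k) (x : V)
  | removeBlue (x : V)

/-- Add, for each `i`, the node `v i` to the red pebbles of processor `f i`. -/
def addRed (C : Conf V k) {m : ℕ} (f : Fin m → Fin k) (v : Fin m → V) :
    Fin k → Finset V :=
  fun j => C.red j ∪ (Finset.univ.filter (fun i => f i = j)).image v

/-- The effect of a move on a configuration. -/
def apply : Move V k → Conf V k → Conf V k
  | .save _ _ v, C => ⟨C.red, C.blue ∪ Finset.univ.image v⟩
  | .load _ f v, C => ⟨addRed C f v, C.blue⟩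
  | .compute _ f v, C => ⟨addRed C f v, C.blue⟩
  | .removeRed j x, C => ⟨Function.update C.red j (C.red j \ {x}), C.blue⟩
  | .removeBlue x, C => ⟨C.red, C.blue \ {x}⟩

/-- When a move may legally be performed in a given configuration. -/
def Legal (E : V → V → Prop) : Conf V k → Move V k → Prop
  | C, .save m f v => m ≤ k ∧ Function.Injective f ∧ ∀ i, v i ∈ C.red (f i)
  | C, .load m f v => m ≤ k ∧ Function.Injective f ∧ ∀ i, v i ∈ C.blue
  | C, .compute m f v =>
      m ≤ k ∧ Function.Injective f ∧ ∀ i, ∀ u, E u (v i) → u ∈ C.red (f i)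
  | _, .removeRed _ _ => True
  | _, .removeBlue _ => True

/-- A configuration respects the fast-memory bound `r` for every processor. -/
def Valid (r : ℕ) (C : Conf V k) : Prop := ∀ j, (C.red j).card ≤ r

/-- `Run E r C ms C'` : starting from configuration `C`, the list of moves `ms`
may be legally executed (respecting the memory bound `r` throughout) and leads
to configuration `C'`. -/
inductive Run (E : V → V → Prop) (r : ℕ) : Conf V k → List (Move V k) → Conf V k → Prop
  | nil (C : Conf V k) : Run E r C [] C
  | cons {C C'' : Conf V k} {mv : Move V k} {ms : List (Move V k)} :
      Legal E C mv → Valid r (apply mv C) → Run E r (apply mv C) ms C'' →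
      Run E r C (mv :: ms) C''

/-- Cost of a single move: `g` for I/O, `1` for compute, `0` for removal. -/
def moveCost (g : ℕ) : Move V k → ℕ
  | .save .. => g
  | .load .. => g
  | .compute .. => 1
  | .removeRed .. => 0
  | .removeBlue .. => 0

/-- Total cost of a sequence of moves. -/
def cost (g : ℕ) (ms : List (Move V k)) : ℕ := (ms.map (moveCost g)).sum

def isIO : Move V k → Bool
  | .save .. => true
  | .load .. => true
  | _ => false

/-- The number of I/O moves in a sequence of moves. -/
def ioCount (ms : List (Move V k)) : ℕ := (ms.filter isIO).length

def isCompute : Move V k → Bool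
  | .compute .. => true
  | _ => false

/-- The number of compute moves in a sequence of moves. -/
def computeCount (ms : List (Move V k)) : ℕ := (ms.filter isCompute).length

/-- A sink of the DAG: a node with no outgoing edge. -/
def IsSink (E : V → V → Prop) (v : V) : Prop := ∀ u, ¬ E v u

/-- A terminal configuration: every sink carries at least one pebble. -/
def Terminal (E : V → V → Prop) (C : Conf V k) : Prop :=
  ∀ v, IsSink E v → v ∈ C.blue ∨ ∃ j, v ∈ C.red j

/-- The initial (all-empty) configuration. -/
def init (V : Type*) (k : ℕ) : Conf V k := ⟨fun _ => ∅, ∅⟩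

/-- `ms` is a pebbling strategy: a legal run from the empty configuration ending
in a terminal configuration. -/
def IsPebbling (E : V → V → Prop) (r : ℕ) (ms : List (Move V k)) : Prop :=
  ∃ Cf, Run E r (init V k) ms Cf ∧ Terminal E Cf

/-- The optimal (minimum) cost of a pebbling strategy with `k` processors,
memory bound `r` per processor, and I/O cost `g`. -/
noncomputable def optCost (E : V → V → Prop) (k r g : ℕ) : ℕ :=
  sInf {c | ∃ ms : List (Move V k), IsPebbling E r ms ∧ cost g ms = c}

/-- The minimum number of I/O moves among all minimum-cost pebbling strategies. -/
noncomputable def optIO (E : V → V → Prop) (k r g : ℕ) : ℕ :=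
  sInf {q | ∃ ms : List (Move V k),
    IsPebbling E r ms ∧ cost g ms = optCost E k r g ∧ ioCount ms = q}

/-- The maximum in-degree `Δ_in` of the DAG. -/
noncomputable def maxInDeg (E : V → V → Prop) [Fintype V] : ℕ :=
  Finset.univ.sup fun v => (Finset.univ.filter fun u => E u v).card

/-- The set of nodes computed by a move. -/
def computes : Move V k → Set V
  | .compute _ _ v => Set.range v
  | _ => ∅

/-- `x` is computed by the move at position `s` of `ms`. -/
def ComputedAt (ms : List (Move V k)) (s : ℕ) (x : V) : Prop :=
  ∃ mv, ms[s]? = some mv ∧ x ∈ computes mv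

/-- The set of nodes computed by some move strictly before position `t`. -/
def computedBefore (ms : List (Move V k)) (t : ℕ) : Set V :=
  {x | ∃ s < t, ComputedAt ms s x}

/-- `x` is ready at position `t`: it has not yet been computed, but all its
in-neighbors have been. -/
def Ready (E : V → V → Prop) (ms : List (Move V k)) (t : ℕ) (x : V) : Prop :=
  x ∉ computedBefore ms t ∧ ∀ u, E u x → u ∈ computedBefore ms t

/-- The number of nodes that are ready at position `t`. -/
noncomputable def readyCount (E : V → V → Prop) [Fintype V]
    (ms : List (Move V k)) (t : ℕ) : ℕ :=
  (Finset.univ.filter (Ready E ms t)).card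

end MPP

lemma isDag_of_lt {n : ℕ} {E : Fin n → Fin n → Prop} (hE : ∀ u v, E u v → u < v) :
    IsDag E :=
  fun x h => by
    have h' : Relation.TransGen (· < ·) x x := Relation.TransGen.mono hE x x h
    rw [Relation.transGen_eq_self] at h'
    exact lt_irrefl x h'

namespace MPP

open Finset

variable {V : Type*} {k : ℕ} {E : V → V → Prop} {r g s : ℕ} {ms : List (Move V k)}
  {mv : Move V k} {C C' Cf : Conf V k} {p : Fin k} {x u : V}

lemma Conf.ext (hred : C.red = C'.red) (hblue : C.blue = C'.blue) : C = C' := by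
  cases C
  cases C'
  simp_all

def Pebbled (C : Conf V k) (x : V) : Prop := x ∈ C.blue ∨ ∃ j, x ∈ C.red j

lemma valid_of_card_le [Fintype V] (h : Fintype.card V ≤ r) (C : Conf V k) : Valid r C :=
  fun _ => (Finset.card_le_univ _).trans h

def Computed (ms : List (Move V k)) (x : V) : Prop := ∃ s, ComputedAt ms s x

-- `0` for a node that is never computed.
noncomputable def firstCompute (ms : List (Move V k)) (x : V) : ℕ :=
  sInf {s | ComputedAt ms s x}

lemma computedAt_firstCompute (h : Computed ms x) :
    ComputedAt ms (firstCompute ms x) x :=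
  Nat.sInf_mem h

lemma firstCompute_le (h : ComputedAt ms s x) : firstCompute ms x ≤ s :=
  Nat.sInf_le h

lemma isCompute_of_mem_computes (h : x ∈ computes mv) :
    isCompute mv := by
  cases mv <;> simp_all [computes, isCompute]

lemma card_filter_range_getElem? {α : Type*} (l : List α) (P : α → Bool) :
    #{s ∈ range l.length | ∃ a, l[s]? = some a ∧ P a} = (l.filter P).length := by
  rw [card_filter, sum_range]
  simp only [Fin.is_lt, getElem?_pos, Option.some.injEq, exists_eq_left']
  rw [Fin.sum_univ_fun_getElem l fun a => if P a then 1 else 0]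
  induction l with
  | nil => rfl
  | cons a l ih => cases h : P a <;> simp [h, ih, add_comm]

lemma card_le_computeCount_add [Fintype V] (hall : ∀ x, Computed ms x) (A : Finset V)
    (hA : ∀ x y, x ≠ y → firstCompute ms x = firstCompute ms y → x ∈ A ∨ y ∈ A) :
    Fintype.card V ≤ computeCount ms + #A := by
  have hsteps : #(univ \ A) ≤ computeCount ms := by
    rw [computeCount, ← card_filter_range_getElem?]
    refine card_le_card_of_injOn (firstCompute ms) (fun x _ => ?_) fun x hx y hy hxy => ?_
    · obtain ⟨mv, hmv, hx⟩ := computedAt_firstCompute (hall x)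
      simp only [coe_filter, mem_range, Set.mem_ofPred_eq]
      exact ⟨(List.getElem?_eq_some_iff.1 hmv).1, mv, hmv, isCompute_of_mem_computes hx⟩
    · by_contra hne
      simp only [coe_sdiff, coe_univ, Set.mem_sdiff, Set.mem_univ, mem_coe, true_and] at hx hy
      exact (hA x y hne hxy).elim hx hy
  rw [← card_univ, ← card_sdiff_add_card_eq_card (subset_univ A)]
  omega

lemma cost_append (g : ℕ) (l₁ l₂ : List (Move V k)) :
    cost g (l₁ ++ l₂) = cost g l₁ + cost g l₂ := by
  simp [cost]

lemma cost_eq (g : ℕ) (ms : List (Move V k)) : cost g ms = computeCount ms + g * ioCount ms := by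
  induction ms with
  | nil => rfl
  | cons mv ms ih =>
    simp only [cost, List.map_cons, List.sum_cons] at ih ⊢
    cases mv <;> simp [ih, moveCost, computeCount, ioCount, isCompute, isIO, List.filter_cons] <;>
      ring

variable [DecidableEq V]

def Move.computePairs : Move V k → Finset (V × Fin k)
  | .compute _ f v => univ.image fun i => (v i, f i)
  | _ => ∅

def Move.loads : Move V k → Finset V
  | .load _ _ v => univ.image v
  | _ => ∅

def ComputesAt (ms : List (Move V k)) (s : ℕ) (p : Fin k) (x : V) : Prop :=
  ∃ mv, ms[s]? = some mv ∧ (x, p) ∈ mv.computePairs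

def LoadedAt (ms : List (Move V k)) (s : ℕ) (x : V) : Prop :=
  ∃ mv, ms[s]? = some mv ∧ x ∈ mv.loads

def ComputedBy (ms : List (Move V k)) (p : Fin k) (x : V) : Prop :=
  ∃ mv ∈ ms, (x, p) ∈ mv.computePairs

def Loaded (ms : List (Move V k)) (x : V) : Prop := ∃ mv ∈ ms, x ∈ mv.loads

lemma mem_computes_iff :
    x ∈ computes mv ↔ ∃ p, (x, p) ∈ mv.computePairs := by
  cases mv <;> simp [computes, Move.computePairs, eq_comm]

lemma computedAt_iff :
    ComputedAt ms s x ↔ ∃ p, ComputesAt ms s p x := by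
  simp only [ComputedAt, ComputesAt, mem_computes_iff]
  tauto

lemma ComputesAt.computedBy (h : ComputesAt ms s p x) : ComputedBy ms p x :=
  let ⟨mv, hmv, h⟩ := h; ⟨mv, List.mem_of_getElem? hmv, h⟩

lemma LoadedAt.loaded (h : LoadedAt ms s x) :
    Loaded ms x :=
  let ⟨mv, hmv, h⟩ := h; ⟨mv, List.mem_of_getElem? hmv, h⟩

lemma ComputedBy.exists_computesAt (h : ComputedBy ms p x) : ∃ s, ComputesAt ms s p x :=
  let ⟨mv, hmv, h⟩ := h
  let ⟨s, hs⟩ := List.mem_iff_getElem?.1 hmv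
  ⟨s, mv, hs, h⟩

lemma Computed.exists_computedBy (h : Computed ms x) :
    ∃ p, ComputedBy ms p x :=
  let ⟨_, h⟩ := h
  let ⟨p, h⟩ := computedAt_iff.1 h
  ⟨p, h.computedBy⟩

lemma addRed_id (C : Conf V k) (v : Fin k → V) (j : Fin k) :
    addRed C id v j = C.red j ∪ {v j} := by
  simp [addRed, filter_eq']

lemma mem_red_apply (h : x ∈ (apply mv C).red p) :
    x ∈ C.red p ∨ (x, p) ∈ mv.computePairs ∨ x ∈ mv.loads := by
  cases mv with
  | save => exact Or.inl h
  | load m f v | compute m f v =>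
    simp only [apply, addRed, mem_union, mem_image, mem_filter, mem_univ, true_and] at h
    simp only [Move.computePairs, Move.loads, mem_image, mem_univ, true_and, Prod.mk.injEq]
    grind
  | removeRed j y =>
    simp only [apply] at h
    rcases eq_or_ne p j with rfl | hpj
    · simp only [Function.update_self, mem_sdiff] at h
      exact Or.inl h.1
    · simp only [Function.update_of_ne hpj] at h
      exact Or.inl h
  | removeBlue => exact Or.inl h

lemma mem_blue_apply (hl : Legal E C mv) (h : x ∈ (apply mv C).blue) : Pebbled C x := by
  cases mv with
  | save m f v =>
    simp only [apply, mem_union, mem_image, mem_univ, true_and] at h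
    obtain h | ⟨i, rfl⟩ := h
    · exact Or.inl h
    · exact Or.inr ⟨_, hl.2.2 i⟩
  | removeBlue y => exact Or.inl (mem_sdiff.1 h).1
  | load | compute | removeRed => exact Or.inl h

lemma mem_blue_of_mem_loads (hl : Legal E C mv) (h : x ∈ mv.loads) : x ∈ C.blue := by
  cases mv with
  | load m f v =>
    obtain ⟨i, -, rfl⟩ := mem_image.1 h
    exact hl.2.2 i
  | _ => simp [Move.loads] at h

lemma pebbled_apply (hl : Legal E C mv) (h : Pebbled (apply mv C) x) :
    Pebbled C x ∨ x ∈ computes mv := by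
  obtain hb | ⟨j, hr⟩ := h
  · exact Or.inl (mem_blue_apply hl hb)
  · rcases mem_red_apply hr with hr | hc | hload
    · exact Or.inl (Or.inr ⟨j, hr⟩)
    · exact Or.inr (mem_computes_iff.2 ⟨j, hc⟩)
    · exact Or.inl (Or.inl (mem_blue_of_mem_loads hl hload))

def confAt (ms : List (Move V k)) (s : ℕ) : Conf V k :=
  (ms.take s).foldl (fun C mv => apply mv C) (init V k)

lemma confAt_succ (h : s < ms.length) :
    confAt ms (s + 1) = apply ms[s] (confAt ms s) := by
  rw [confAt, List.take_add_one, List.getElem?_eq_getElem h, Option.toList_some,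
    List.foldl_append]
  rfl

lemma Run.eq_foldl (h : Run E r C ms C') : C' = ms.foldl (fun C mv => apply mv C) C := by
  induction h with
  | nil => rfl
  | cons _ _ _ ih => exact ih

lemma Run.legal_getElem (h : Run E r C ms C') (hs : s < ms.length) :
    Legal E ((ms.take s).foldl (fun C mv => apply mv C) C) ms[s] := by
  induction h generalizing s with
  | nil => simp at hs
  | cons hl _ _ ih =>
    cases s with
    | zero => simpa using hl
    | succ s => simpa using ih (s := s) (by simpa using hs)

lemma Run.legal_confAt (hrun : Run E r (init V k) ms Cf) (hs : s < ms.length) :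
    Legal E (confAt ms s) ms[s] :=
  hrun.legal_getElem hs

lemma Run.eq_confAt_length (hrun : Run E r (init V k) ms Cf) : Cf = confAt ms ms.length := by
  rw [hrun.eq_foldl, confAt, List.take_length]

lemma exists_of_mem_red_confAt (hs : s ≤ ms.length)
    (h : x ∈ (confAt ms s).red p) : ∃ s' < s, ComputesAt ms s' p x ∨ LoadedAt ms s' x := by
  induction s with
  | zero => simp [confAt, init] at h
  | succ s ih =>
    rw [confAt_succ (by omega)] at h
    rcases mem_red_apply h with h | h | h
    · obtain ⟨s', hs', h'⟩ := ih (by omega) h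
      exact ⟨s', by omega, h'⟩
    · exact ⟨s, by omega, Or.inl ⟨_, List.getElem?_eq_getElem _, h⟩⟩
    · exact ⟨s, by omega, Or.inr ⟨_, List.getElem?_eq_getElem _, h⟩⟩

lemma Run.mem_computedBefore_of_pebbled (hrun : Run E r (init V k) ms Cf)
    (hs : s ≤ ms.length) (h : Pebbled (confAt ms s) x) : x ∈ computedBefore ms s := by
  induction s with
  | zero => simp [Pebbled, confAt, init] at h
  | succ s ih =>
    rw [confAt_succ (by omega)] at h
    rcases pebbled_apply (hrun.legal_confAt (by omega)) h with h | h
    · obtain ⟨s', hs', h'⟩ := ih (by omega) h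
      exact ⟨s', by omega, h'⟩
    · exact ⟨s, by omega, _, List.getElem?_eq_getElem _, h⟩

lemma Run.mem_red_of_computesAt (hrun : Run E r (init V k) ms Cf)
    (hx : ComputesAt ms s p x) (hu : E u x) :
    s < ms.length ∧ u ∈ (confAt ms s).red p := by
  obtain ⟨mv, hmv, hxp⟩ := hx
  obtain ⟨hs, rfl⟩ := List.getElem?_eq_some_iff.1 hmv
  refine ⟨hs, ?_⟩
  have hl := hrun.legal_confAt hs
  generalize ms[s] = mv at hl hxp
  cases mv with
  | compute m f v =>
    obtain ⟨i, -, hi⟩ := mem_image.1 hxp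
    simp only [Prod.mk.injEq] at hi
    obtain ⟨rfl, rfl⟩ := hi
    exact hl.2.2 i u hu
  | _ => simp [Move.computePairs] at hxp

lemma Run.exists_of_computesAt_of_edge (hrun : Run E r (init V k) ms Cf)
    (hx : ComputesAt ms s p x) (hu : E u x) :
    ∃ s' < s, ComputesAt ms s' p u ∨ LoadedAt ms s' u :=
  have h := hrun.mem_red_of_computesAt hx hu
  exists_of_mem_red_confAt h.1.le h.2

lemma Run.mem_computedBefore_of_edge (hrun : Run E r (init V k) ms Cf)
    (hx : ComputedAt ms s x) (hu : E u x) : u ∈ computedBefore ms s := by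
  obtain ⟨p, hx⟩ := computedAt_iff.1 hx
  have h := hrun.mem_red_of_computesAt hx hu
  exact hrun.mem_computedBefore_of_pebbled h.1.le (Or.inr ⟨p, h.2⟩)

lemma Run.eq_of_computesAt (hrun : Run E r (init V k) ms Cf) {y : V}
    (hx : ComputesAt ms s p x) (hy : ComputesAt ms s p y) : x = y := by
  obtain ⟨mv, hmv, hxp⟩ := hx
  obtain ⟨mv', hmv', hyp⟩ := hy
  obtain rfl : mv' = mv := Option.some.inj (hmv'.symm.trans hmv)
  obtain ⟨hs, rfl⟩ := List.getElem?_eq_some_iff.1 hmv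
  have hl := hrun.legal_confAt hs
  generalize ms[s] = mv at hl hxp hyp
  cases mv with
  | compute m f v =>
    obtain ⟨i, -, hi⟩ := mem_image.1 hxp
    obtain ⟨j, -, hj⟩ := mem_image.1 hyp
    simp only [Prod.mk.injEq] at hi hj
    rw [← hi.1, ← hj.1, hl.2.1 (hi.2.trans hj.2.symm)]
  | _ => simp [Move.computePairs] at hxp

lemma Run.firstCompute_lt_of_edge (hrun : Run E r (init V k) ms Cf)
    (hx : Computed ms x) (hu : E u x) :
    Computed ms u ∧ firstCompute ms u < firstCompute ms x := by
  obtain ⟨s, hs, hc⟩ := hrun.mem_computedBefore_of_edge (computedAt_firstCompute hx) hu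
  exact ⟨⟨s, hc⟩, (firstCompute_le hc).trans_lt hs⟩

lemma Run.firstCompute_lt_of_transGen (hrun : Run E r (init V k) ms Cf) {y : V}
    (hy : Computed ms y) (h : Relation.TransGen E x y) :
    firstCompute ms x < firstCompute ms y := by
  induction h with
  | single h => exact (hrun.firstCompute_lt_of_edge hy h).2
  | tail _ h ih =>
    obtain ⟨hb, hlt⟩ := hrun.firstCompute_lt_of_edge hy h
    exact (ih hb).trans hlt

lemma Run.computed_of_terminal [Finite V] (hdag : IsDag E) (hrun : Run E r (init V k) ms Cf)
    (hterm : Terminal E Cf) (x : V) : Computed ms x := by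
  have : IsTrans V (flip (Relation.TransGen E)) := ⟨fun _ _ _ h₁ h₂ => h₂.trans h₁⟩
  have : Std.Irrefl (flip (Relation.TransGen E)) := ⟨hdag⟩
  refine (Finite.wellFounded_of_trans_of_irrefl (flip (Relation.TransGen E))).induction x ?_
  intro x ih
  by_cases hx : IsSink E x
  · obtain ⟨s, -, hs⟩ := hrun.mem_computedBefore_of_pebbled le_rfl
      (hrun.eq_confAt_length ▸ hterm x hx)
    exact ⟨s, hs⟩
  · obtain ⟨u, hxu⟩ : ∃ u, E x u := by simpa [IsSink] using hx
    obtain ⟨s, hs⟩ := ih u (.single hxu)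
    obtain ⟨s', -, hs'⟩ := hrun.mem_computedBefore_of_edge hs hxu
    exact ⟨s', hs'⟩

lemma Run.computedBy_of_edge (hrun : Run E r (init V k) ms Cf)
    (hx : ComputedBy ms p x) (hu : E u x) (hnl : ¬ Loaded ms u) : ComputedBy ms p u := by
  obtain ⟨s, hs⟩ := hx.exists_computesAt
  obtain ⟨s', -, h | h⟩ := hrun.exists_of_computesAt_of_edge hs hu
  · exact h.computedBy
  · exact absurd h.loaded hnl

lemma Run.computedBy_of_transGen (hrun : Run E r (init V k) ms Cf) {y : V}
    (hy : ComputedBy ms p y) (h : Relation.TransGen (fun a b => E a b ∧ ¬ Loaded ms a) x y) :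
    ComputedBy ms p x := by
  induction h using Relation.TransGen.head_induction_on with
  | single h => exact hrun.computedBy_of_edge hy h.1 h.2
  | head h _ ih => exact hrun.computedBy_of_edge ih h.1 h.2

lemma Run.card_filter_exists_mem_le {β : Type*} [Fintype β] [DecidableEq β]
    (hrun : Run E r C ms Cf) (S : Move V k → Finset β) (P : Move V k → Bool)
    (hS : ∀ C mv, Legal E C mv → #(S mv) ≤ if P mv then k else 0) :
    #{b | ∃ mv ∈ ms, b ∈ S mv} ≤ k * (ms.filter P).length := by
  induction hrun with
  | nil => simp
  | @cons C _ mv ms hl _ _ ih =>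
    calc #{b | ∃ mv' ∈ mv :: ms, b ∈ S mv'}
        ≤ #(S mv ∪ univ.filter fun b => ∃ mv' ∈ ms, b ∈ S mv') :=
          card_le_card fun b => by simp
      _ ≤ (if P mv then k else 0) + k * (ms.filter P).length :=
          (card_union_le _ _).trans (add_le_add (hS C mv hl) ih)
      _ = k * ((mv :: ms).filter P).length := by
          cases h : P mv <;> simp [h, mul_add, add_comm]

lemma card_computePairs_le (hl : Legal E C mv) :
    #mv.computePairs ≤ if isCompute mv then k else 0 := by
  cases mv with
  | compute m f v =>
    simpa [Move.computePairs, isCompute] using card_image_le.trans_eq (by simp) |>.trans hl.1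
  | _ => simp [Move.computePairs]

lemma card_loads_le (hl : Legal E C mv) :
    #mv.loads ≤ if isIO mv then k else 0 := by
  cases mv with
  | load m f v =>
    simpa [Move.loads, isIO] using card_image_le.trans_eq (by simp) |>.trans hl.1
  | _ => simp [Move.loads, isIO]

lemma Run.card_computedBy_le [Fintype V] (hrun : Run E r C ms Cf) :
    #{xp : V × Fin k | ComputedBy ms xp.2 xp.1} ≤ k * computeCount ms := by
  convert hrun.card_filter_exists_mem_le _ _ fun _ _ => card_computePairs_le using 3 <;> rfl

lemma Run.card_loaded_le [Fintype V] (hrun : Run E r C ms Cf) :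
    #{x | Loaded ms x} ≤ k * ioCount ms := by
  convert hrun.card_filter_exists_mem_le _ _ fun _ _ => card_loads_le using 3 <;> rfl

lemma card_add_card_le_card_computedBy [Fintype V] {ms : List (Move V 2)}
    (hall : ∀ x, ∃ p, ComputedBy ms p x) :
    Fintype.card V + #{x | ∀ p, ComputedBy ms p x} ≤
      #{xp : V × Fin 2 | ComputedBy ms xp.2 xp.1} := by
  calc Fintype.card V + #{x | ∀ p, ComputedBy ms p x}
      = ∑ x : V, (1 + if ∀ p, ComputedBy ms p x then 1 else 0) := by
        rw [sum_add_distrib, card_filter, sum_const, card_univ, smul_eq_mul, mul_one]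
    _ ≤ ∑ x : V, #{p | ComputedBy ms p x} := sum_le_sum fun x _ => by
        split_ifs with h
        · simp [h]
        · obtain ⟨p, hp⟩ := hall x
          simpa using card_pos.2 ⟨p, by simpa using hp⟩
    _ = #{xp : V × Fin 2 | ComputedBy ms xp.2 xp.1} := by
        simp only [card_filter, Fintype.sum_prod_type]

lemma optCost_le (h : IsPebbling E r ms) : optCost E k r g ≤ cost g ms :=
  Nat.sInf_le ⟨ms, h, rfl⟩

lemma exists_optIO (h : IsPebbling E r ms) :
    ∃ ms' : List (Move V k), IsPebbling E r ms' ∧ cost g ms' = optCost E k r g ∧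
      ioCount ms' = optIO E k r g := by
  obtain ⟨ms₁, h₁, hc₁⟩ := Nat.sInf_mem (⟨_, ms, h, rfl⟩ :
    {c | ∃ ms : List (Move V k), IsPebbling E r ms ∧ cost g ms = c}.Nonempty)
  exact Nat.sInf_mem (⟨_, ms₁, h₁, hc₁, rfl⟩ :
    {q | ∃ ms : List (Move V k), IsPebbling E r ms ∧ cost g ms = optCost E k r g ∧
      ioCount ms = q}.Nonempty)

lemma optIO_eq_zero (h : IsPebbling E r ms) (hio : ioCount ms = 0)
    (hmin : ∀ ms' : List (Move V k), IsPebbling E r ms' → cost g ms ≤ cost g ms') :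
    optIO E k r g = 0 := by
  obtain ⟨ms', h', hc', -⟩ := exists_optIO (g := g) h
  have hopt : cost g ms = optCost E k r g := le_antisymm (hc' ▸ hmin ms' h') (optCost_le h)
  exact Nat.sInf_eq_zero.2 (Or.inl ⟨ms, h, hopt, hio⟩)

lemma optIO_of_forall_cost_le (h : IsPebbling E r ms) {P : ℕ → Prop}
    (hP : ∀ ms' : List (Move V k), IsPebbling E r ms' → cost g ms' ≤ cost g ms →
      P (ioCount ms')) :
    P (optIO E k r g) := by
  obtain ⟨ms', h', hc', hio'⟩ := exists_optIO (g := g) h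
  exact hio' ▸ hP ms' h' (hc' ▸ optCost_le h)

lemma Run.append {C'' : Conf V k} {l₁ l₂ : List (Move V k)} (h₁ : Run E r C l₁ C')
    (h₂ : Run E r C' l₂ C'') : Run E r C (l₁ ++ l₂) C'' := by
  induction h₁ with
  | nil => exact h₂
  | cons hl hv _ ih => exact .cons hl hv (ih h₂)

lemma Run.flatMap_range {S : ℕ → Conf V k} {f : ℕ → List (Move V k)} {N : ℕ}
    (h : ∀ i < N, Run E r (S i) (f i) (S (i + 1))) :
    Run E r (S 0) ((List.range N).flatMap f) (S N) := by
  induction N with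
  | zero => exact .nil _
  | succ N ih =>
    rw [List.range_succ, List.flatMap_append, List.flatMap_singleton]
    exact (ih fun i hi => h i (by omega)).append (h N (by omega))

lemma Run.map_range [Fintype V] (hr : Fintype.card V ≤ r) {S : ℕ → Conf V k}
    {f : ℕ → Move V k} {N : ℕ} (hl : ∀ i < N, Legal E (S i) (f i))
    (happly : ∀ i < N, apply (f i) (S i) = S (i + 1)) :
    Run E r (S 0) ((List.range N).map f) (S N) := by
  rw [List.map_eq_flatMap]
  refine Run.flatMap_range fun i hi => ?_
  rw [← happly i hi]
  exact .cons (hl i hi) (valid_of_card_le hr _) (.nil _)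

lemma card_le_cost_of_isPebbling [Fintype V] (hdag : IsDag E)
    {ms : List (Move V 1)} (h : IsPebbling E r ms) : Fintype.card V ≤ cost g ms := by
  obtain ⟨Cf, hrun, hterm⟩ := h
  calc Fintype.card V ≤ #{xp : V × Fin 1 | ComputedBy ms xp.2 xp.1} := by
        refine card_le_card_of_injOn (fun x => (x, 0)) (fun x _ => ?_) fun x _ y _ h => ?_
        · obtain ⟨p, hp⟩ := (hrun.computed_of_terminal hdag hterm x).exists_computedBy
          simpa [Subsingleton.elim p 0] using hp
        · exact (Prod.mk.inj h).1
    _ ≤ 1 * computeCount ms := hrun.card_computedBy_le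
    _ ≤ cost g ms := by rw [cost_eq]; omega

section Sequential

variable {n : ℕ} [NeZero n] {E : Fin n → Fin n → Prop}

def sequentialSchedule (n : ℕ) [NeZero n] : List (Move (Fin n) 1) :=
  (List.range n).map fun a => .compute 1 id fun _ => Fin.ofNat n a

lemma isPebbling_sequentialSchedule (hE : ∀ u v, E u v → u < v) (hr : n ≤ r) :
    IsPebbling E r (sequentialSchedule n) := by
  let S : ℕ → Conf (Fin n) 1 := fun a => ⟨fun _ => {x | x.val < a}, ∅⟩
  have hS0 : S 0 = init (Fin n) 1 := by simp [S, init]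
  refine ⟨S n, hS0 ▸ Run.map_range (by simpa using hr) (fun a ha => ?_) (fun a ha => ?_),
    fun x _ => Or.inr ⟨0, by simp [S]⟩⟩
  · refine ⟨le_rfl, Function.injective_id, fun i u hu => ?_⟩
    have := hE _ _ hu
    simp [S, Fin.lt_def, Nat.mod_eq_of_lt ha] at this ⊢
    exact this
  · refine Conf.ext (funext fun j => ext fun x => ?_) rfl
    simp [S, apply, addRed_id, Fin.ext_iff, Nat.mod_eq_of_lt ha]
    omega

lemma cost_sequentialSchedule : cost g (sequentialSchedule n) = n := by
  simp [cost, sequentialSchedule, Function.comp_def, moveCost]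

lemma ioCount_sequentialSchedule : ioCount (sequentialSchedule n) = 0 := by
  simp [ioCount, sequentialSchedule, isIO]

lemma optIO_one_eq_zero (hE : ∀ u v, E u v → u < v) (hr : n ≤ r) : optIO E 1 r g = 0 :=
  optIO_eq_zero (isPebbling_sequentialSchedule hE hr) ioCount_sequentialSchedule fun _ h => by
    simpa [cost_sequentialSchedule] using card_le_cost_of_isPebbling (isDag_of_lt hE) h

end Sequential

end MPP

namespace Zipper

variable {n : ℕ}

def pos (x : Fin n) : ℕ := x.val / 2

def side (x : Fin n) : ℕ := x.val % 2

def block (x : Fin n) : ℕ := pos x / 9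

end Zipper

/- Node `x` sits at position `x / 2` of chain `x % 2`. Besides the edges along each chain, both
nodes at a position divisible by 9 (the start of a block) have both nodes of the previous
position as in-neighbours. -/
open Zipper in
def zipper (n : ℕ) (u v : Fin n) : Prop :=
  pos v = pos u + 1 ∧ (side u = side v ∨ pos v % 9 = 0)

namespace Zipper

open Relation Finset MPP

variable {n : ℕ}

lemma lt_of_zipper {u v : Fin n} (h : zipper n u v) : u < v := by
  simp only [zipper, pos, side] at h
  rw [Fin.lt_def]
  omega

lemma exists_pos_side (π σ : ℕ) (h : 2 * π + σ < n) (hσ : σ < 2) :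
    ∃ w : Fin n, pos w = π ∧ side w = σ :=
  ⟨⟨2 * π + σ, h⟩, by simp only [pos, side]; omega⟩

lemma transGen_of_pos_lt {u v : Fin n} (h : pos u < pos v)
    (h' : side u = side v ∨ block u < block v) :
    TransGen (fun a b => zipper n a b ∧ pos u ≤ pos a ∧ pos b ≤ pos v) u v := by
  induction hv : pos v generalizing v with
  | zero => omega
  | succ π ih =>
    by_cases hπ : pos u = π
    · refine .single ⟨⟨by omega, ?_⟩, le_rfl, hv.le⟩
      simp only [block] at h'
      omega
    obtain ⟨w, hw, hwv, hw'⟩ : ∃ w : Fin n, pos w = π ∧ zipper n w v ∧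
        (side u = side w ∨ block u < block w) := by
      have hv2 : 2 * π + 1 < n := by have := v.isLt; simp only [pos] at hv; omega
      by_cases hb : (π + 1) % 9 = 0
      · obtain ⟨w, hw, hws⟩ := exists_pos_side (n := n) π (side u)
          (by simp only [side]; omega) (by simp only [side]; omega)
        exact ⟨w, hw, ⟨by omega, Or.inr (by omega)⟩, Or.inl hws.symm⟩
      · obtain ⟨w, hw, hws⟩ := exists_pos_side (n := n) π (side v)
          (by simp only [side]; omega) (by simp only [side]; omega)
        refine ⟨w, hw, ⟨by omega, Or.inl hws⟩, ?_⟩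
        simp only [block] at h' ⊢
        omega
    exact .tail (TransGen.mono (fun a b hab => ⟨hab.1, hab.2.1, by omega⟩) _ _
      (ih (by omega) hw' hw)) ⟨hwv, by omega, by omega⟩

lemma transGen_or_transGen {x y : Fin n} (hne : x ≠ y)
    (h : side x = side y ∨ block x ≠ block y) :
    TransGen (zipper n) x y ∨ TransGen (zipper n) y x := by
  have reach : ∀ {u v : Fin n}, pos u < pos v → side u = side v ∨ block u < block v →
      TransGen (zipper n) u v := fun h h' =>
    TransGen.mono (fun _ _ h => h.1) _ _ (transGen_of_pos_lt h h')
  simp only [block] at h reach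
  rcases lt_trichotomy (pos x) (pos y) with hlt | heq | hgt
  · exact .inl (reach hlt (by omega))
  · refine absurd (Fin.ext ?_) hne
    simp only [pos, side] at heq h
    omega
  · exact .inr (reach hgt (by omega))

lemma isDag_zipper : IsDag (zipper n) :=
  isDag_of_lt fun _ _ => lt_of_zipper

lemma block_lt {T : ℕ} (hn : n = 18 * T) (x : Fin n) : block x < T := by
  have := x.isLt
  simp only [block, pos]
  omega

lemma le_card_block {T b : ℕ} (hn : n = 18 * T) (hb : b < T) :
    18 ≤ #{x : Fin n | block x = b} :=
  calc 18 = #(univ : Finset (Fin 18)) := by simp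
    _ ≤ _ := by
      refine card_le_card_of_injOn (fun i => ⟨18 * b + i, by omega⟩) (fun i _ => ?_)
        fun i _ j _ h => ?_
      · simp only [coe_filter, mem_univ, true_and]
        show (18 * b + (i : ℕ)) / 2 / 9 = b
        omega
      · simpa [Fin.ext_iff] using h

lemma card_block_side_zero_le (t : ℕ) : #{x : Fin n | side x = 0 ∧ block x = t} ≤ 9 :=
  calc _ ≤ #(range 9) := card_le_card_of_injOn (fun x => pos x % 9)
        (fun x _ => by simp only [mem_coe, mem_range]; omega)
        fun x hx y hy h => by
          simp only [coe_filter, mem_univ, true_and, Set.mem_ofPred_eq] at hx hy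
          simp only [side, block, pos] at hx hy h
          exact Fin.ext (by omega)
    _ = 9 := card_range 9

lemma card_le_of_forall_side_eq_zero (A : Finset (Fin n)) (hA : ∀ x ∈ A, side x = 0) :
    #A ≤ 9 + 9 * #((A.image block).erase 0) :=
  calc #A = ∑ t ∈ A.image block, #{x ∈ A | block x = t} := card_eq_sum_card_image block A
    _ ≤ ∑ _t ∈ A.image block, 9 := sum_le_sum fun t _ =>
        (card_le_card fun x hx => by simp_all).trans (card_block_side_zero_le t)
    _ ≤ 9 + 9 * #((A.image block).erase 0) := by
        have := pred_card_le_card_erase (s := A.image block) (a := 0)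
        rw [sum_const, smul_eq_mul]
        omega

section LowerBound

variable {r : ℕ} {ms : List (Move (Fin n) 2)} {Cf : Conf (Fin n) 2}

noncomputable def pairedNodes (ms : List (Move (Fin n) 2)) : Finset (Fin n) :=
  {x | side x = 0 ∧ ∃ y ≠ x, firstCompute ms y = firstCompute ms x}

noncomputable def pairedBlocks (ms : List (Move (Fin n) 2)) : Finset ℕ :=
  ((pairedNodes ms).image block).erase 0

lemma side_ne_and_block_eq (hrun : Run (zipper n) r (init (Fin n) 2) ms Cf)
    (hall : ∀ x, Computed ms x) {x y : Fin n} (hne : x ≠ y)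
    (h : firstCompute ms x = firstCompute ms y) : side x ≠ side y ∧ block x = block y := by
  by_contra hc
  rw [not_and_or, not_not] at hc
  rcases transGen_or_transGen hne hc with hxy | hyx
  · exact (hrun.firstCompute_lt_of_transGen (hall y) hxy).ne h
  · exact (hrun.firstCompute_lt_of_transGen (hall x) hyx).ne h.symm

lemma le_computeCount_add_card_pairedNodes
    (hrun : Run (zipper n) r (init (Fin n) 2) ms Cf) (hall : ∀ x, Computed ms x) :
    n ≤ computeCount ms + #(pairedNodes ms) := by
  simpa using card_le_computeCount_add hall (pairedNodes ms) fun x y hne h => by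
    have hside := (side_ne_and_block_eq hrun hall hne h).1
    simp only [pairedNodes, mem_filter, mem_univ, true_and]
    by_cases hx : side x = 0
    · exact .inl ⟨hx, y, hne.symm, h.symm⟩
    · exact .inr ⟨by simp only [side] at hx hside ⊢; omega, x, hne, h⟩

lemma computedBy_of_block_add_one_eq (hrun : Run (zipper n) r (init (Fin n) 2) ms Cf)
    {p : Fin 2} {w z : Fin n} (hz : ComputedBy ms p z) (hwz : block w + 1 = block z)
    (hnl : ∀ a, block w ≤ block a → block a ≤ block z → ¬ Loaded ms a) :
    ComputedBy ms p w := by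
  simp only [block] at hwz hnl
  refine hrun.computedBy_of_transGen hz (TransGen.mono ?_ _ _ (transGen_of_pos_lt (by omega)
    (.inr (by simp only [block]; omega))))
  rintro a b ⟨hab, hwa, hbz⟩
  simp only [zipper] at hab
  exact ⟨hab, hnl a (by omega) (by omega)⟩

lemma computedBy_of_mem_pairedBlocks (hrun : Run (zipper n) r (init (Fin n) 2) ms Cf)
    (hall : ∀ x, Computed ms x) {t : ℕ} (ht : t ∈ pairedBlocks ms)
    (hnl : ∀ z, Loaded ms z → block z + 1 ≠ t ∧ block z ≠ t) {w : Fin n}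
    (hw : block w + 1 = t) (p : Fin 2) : ComputedBy ms p w := by
  obtain ⟨-, x, hx, rfl⟩ : t ≠ 0 ∧ ∃ x ∈ pairedNodes ms, block x = t := by
    simpa [pairedBlocks] using ht
  obtain ⟨-, y, hyx, hτ⟩ :
      side x = 0 ∧ ∃ y ≠ x, firstCompute ms y = firstCompute ms x := by
    simpa [pairedNodes] using hx
  obtain ⟨q, hq⟩ := computedAt_iff.1 (computedAt_firstCompute (hall x))
  obtain ⟨q', hq'⟩ := computedAt_iff.1 (hτ ▸ computedAt_firstCompute (hall y))
  have hqq' : q ≠ q' := fun h => hyx (hrun.eq_of_computesAt (h ▸ hq') hq)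
  have hcomp : ∀ {p z}, ComputedBy ms p z → block z = block x → ComputedBy ms p w :=
    fun hz hzx => computedBy_of_block_add_one_eq hrun hz (by omega) fun a h₁ h₂ ha => by
      have := hnl a ha
      omega
  obtain rfl | rfl : p = q ∨ p = q' := by omega
  · exact hcomp hq.computedBy rfl
  · exact hcomp hq'.computedBy (side_ne_and_block_eq hrun hall hyx hτ).2

lemma card_pairedBlocks_le {T : ℕ} (hn : n = 18 * T)
    (hrun : Run (zipper n) r (init (Fin n) 2) ms Cf) (hall : ∀ x, Computed ms x) :
    18 * #(pairedBlocks ms) ≤ 36 * #{x | Loaded ms x} + #{x | ∀ p, ComputedBy ms p x} := by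
  set B := pairedBlocks ms
  set nearLoad : ℕ → Prop := fun t => ∃ z, Loaded ms z ∧ (block z + 1 = t ∨ block z = t)
  have hnear : #{t ∈ B | nearLoad t} ≤ 2 * #{x | Loaded ms x} := by
    calc #{t ∈ B | nearLoad t}
        ≤ #(({x | Loaded ms x} : Finset (Fin n)).image (block · + 1) ∪
            ({x | Loaded ms x} : Finset (Fin n)).image block) :=
          card_le_card fun t ht => by
            obtain ⟨z, hz, rfl | rfl⟩ := (mem_filter.1 ht).2
            · exact mem_union_left _ (mem_image_of_mem _ (by simpa using hz))
            · exact mem_union_right _ (mem_image_of_mem _ (by simpa using hz))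
      _ ≤ 2 * #{x | Loaded ms x} := by
          have := card_union_le (({x | Loaded ms x} : Finset (Fin n)).image (block · + 1))
            (({x | Loaded ms x} : Finset (Fin n)).image block)
          have := card_image_le (s := ({x | Loaded ms x} : Finset (Fin n))) (f := (block · + 1))
          have := card_image_le (s := ({x | Loaded ms x} : Finset (Fin n))) (f := block)
          omega
  have hfar : 18 * #{t ∈ B | ¬ nearLoad t} ≤ #{x | ∀ p, ComputedBy ms p x} := by
    calc 18 * #{t ∈ B | ¬ nearLoad t} = ∑ _t ∈ {t ∈ B | ¬ nearLoad t}, 18 := by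
          rw [sum_const, smul_eq_mul, mul_comm]
      _ ≤ ∑ t ∈ {t ∈ B | ¬ nearLoad t},
            #{x ∈ {x | ∀ p, ComputedBy ms p x} | block x + 1 = t} :=
          sum_le_sum fun t ht => by
            obtain ⟨htB, hfar⟩ := mem_filter.1 ht
            obtain ⟨ht0, x, -, rfl⟩ : t ≠ 0 ∧ ∃ x ∈ pairedNodes ms, block x = t := by
              simpa [B, pairedBlocks] using htB
            refine (le_card_block hn (b := block x - 1) (by have := block_lt hn x; omega)).trans
              (card_le_card fun w hw => ?_)
            have hw : block w + 1 = block x := by simp at hw; omega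
            simp only [mem_filter, mem_univ, true_and]
            refine ⟨computedBy_of_mem_pairedBlocks hrun hall htB (fun z hz => ?_) hw, hw⟩
            exact not_or.1 fun h => hfar ⟨z, hz, h⟩
      _ ≤ #{x | ∀ p, ComputedBy ms p x} :=
          (sum_card_fiberwise_eq_card_filter _ _ _).trans_le (card_filter_le _ _)
  have : #{t ∈ B | nearLoad t} + #{t ∈ B | ¬ nearLoad t} = #B :=
    card_filter_add_card_filter_not _
  omega

lemma three_mul_le_of_terminal {T : ℕ} (hn : n = 18 * T)
    (hrun : Run (zipper n) r (init (Fin n) 2) ms Cf) (hterm : Terminal (zipper n) Cf) :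
    3 * n ≤ 4 * computeCount ms + 18 + 72 * ioCount ms := by
  have hall := hrun.computed_of_terminal isDag_zipper hterm
  have h₁ := le_computeCount_add_card_pairedNodes hrun hall
  have h₂ := card_le_of_forall_side_eq_zero (pairedNodes ms) fun x hx => by
    simp only [pairedNodes, mem_filter] at hx
    exact hx.2.1
  have h₃ := card_pairedBlocks_le hn hrun hall
  have h₄ := hrun.card_loaded_le
  have h₅ := card_add_card_le_card_computedBy fun x => (hall x).exists_computedBy
  have h₆ := hrun.card_computedBy_le
  simp only [Fintype.card_fin] at h₅
  simp only [pairedBlocks] at h₃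
  -- With `C`, `Q` the numbers of compute and I/O moves, `B` the paired blocks and `D` the nodes
  -- computed by both processors:
  -- `2n ≤ 2C + 18 + 18 #B ≤ 2C + 18 + 72 Q + #D ≤ 4C + 18 + 72 Q - n`.
  omega

end LowerBound

section ParallelSchedule

def onChains [NeZero n] (π : ℕ) : Fin 2 → Fin n := fun p => Fin.ofNat n (2 * π + p)

def acrossChains [NeZero n] (π : ℕ) : Fin 2 → Fin n := fun p => Fin.ofNat n (2 * π + 1 - p)

def blockMoves [NeZero n] (t : ℕ) : List (Move (Fin n) 2) :=
  (if t = 0 then []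
    else [.save 2 id (onChains (9 * t - 1)), .load 2 id (acrossChains (9 * t - 1))]) ++
  (List.range 9).map fun j => .compute 2 id (onChains (9 * t + j))

def parallelSchedule (n T : ℕ) [NeZero n] : List (Move (Fin n) 2) :=
  (List.range T).flatMap blockMoves

/- Processor `p` holds its own chain below position `π` and the last nodes of the other chain's
blocks below position `c`; these block ends are also in slow memory. -/
def parallelConf (c π : ℕ) : Conf (Fin n) 2 :=
  ⟨fun p => {x | pos x < π ∧ (side x = p ∨ pos x % 9 = 8 ∧ pos x < c)},
    {x | pos x % 9 = 8 ∧ pos x < c}⟩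

variable {T r : ℕ}

lemma mem_red_parallelConf {c π : ℕ} {p : Fin 2} {x : Fin n} :
    x ∈ (parallelConf c π).red p ↔
      pos x < π ∧ (side x = p ∨ pos x % 9 = 8 ∧ pos x < c) := by
  rw [parallelConf, Finset.mem_filter]
  exact and_iff_right (Finset.mem_univ x)

lemma mem_blue_parallelConf {c π : ℕ} {x : Fin n} :
    x ∈ (parallelConf c π).blue ↔ pos x % 9 = 8 ∧ pos x < c := by
  rw [parallelConf, Finset.mem_filter]
  exact and_iff_right (Finset.mem_univ x)

lemma val_ofNat_of_lt [NeZero n] {a : ℕ} (h : a < n) : (Fin.ofNat n a).val = a := by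
  rw [Fin.val_ofNat, Nat.mod_eq_of_lt h]

lemma run_computeMoves [NeZero n] (hn : n = 18 * T) (hr : n ≤ r) {t : ℕ} (ht : t < T) :
    Run (zipper n) r (parallelConf (9 * t) (9 * t))
      ((List.range 9).map fun j => .compute 2 id (onChains (9 * t + j)))
      (parallelConf (9 * t) (9 * t + 9)) := by
  refine Run.map_range (S := fun j => parallelConf (9 * t) (9 * t + j)) (by simpa using hr)
    (fun j hj => ⟨le_rfl, Function.injective_id, fun i u hu => ?_⟩) fun j hj => ?_
  · have hval := val_ofNat_of_lt (n := n) (a := 2 * (9 * t + j) + i) (by omega)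
    simp only [zipper, onChains, pos, side, hval] at hu
    simp only [id, mem_red_parallelConf, pos, side]
    omega
  · refine Conf.ext (funext fun p => Finset.ext fun x => ?_) rfl
    have hval := val_ofNat_of_lt (n := n) (a := 2 * (9 * t + j) + p) (by omega)
    simp only [apply, addRed_id, onChains, Finset.mem_union, Finset.mem_singleton, Fin.ext_iff,
      hval, mem_red_parallelConf, pos, side]
    omega

lemma run_ioMoves [NeZero n] (hn : n = 18 * T) (hr : n ≤ r) {t : ℕ} (ht₀ : 0 < t)
    (ht : t < T) :
    Run (zipper n) r (parallelConf (9 * t - 9) (9 * t))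
      [.save 2 id (onChains (9 * t - 1)), .load 2 id (acrossChains (9 * t - 1))]
      (parallelConf (9 * t) (9 * t)) := by
  have hvalid := valid_of_card_le (V := Fin n) (k := 2) (by simpa using hr)
  have hfinal : apply (.load 2 id (acrossChains (n := n) (9 * t - 1)))
      (apply (.save 2 id (onChains (9 * t - 1))) (parallelConf (9 * t - 9) (9 * t))) =
      parallelConf (9 * t) (9 * t) := by
    refine Conf.ext (funext fun p => Finset.ext fun x => ?_) (Finset.ext fun x => ?_)
    · simp (disch := omega) only [apply, addRed_id, acrossChains, Finset.mem_union,
        Finset.mem_singleton, mem_red_parallelConf, Fin.ext_iff, pos, side, val_ofNat_of_lt]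
      omega
    · simp (disch := omega) only [apply, onChains, Finset.mem_union, mem_blue_parallelConf,
        Finset.mem_image, Finset.mem_univ, true_and, Fin.exists_fin_two, Fin.ext_iff, pos,
        val_ofNat_of_lt, Fin.isValue, Fin.val_zero, Fin.val_one]
      omega
  refine .cons ⟨le_rfl, Function.injective_id, fun p => ?_⟩ (hvalid _)
    (.cons ⟨le_rfl, Function.injective_id, fun p => ?_⟩ (hvalid _) (hfinal ▸ .nil _))
  · simp (disch := omega) only [id, onChains, mem_red_parallelConf, pos, side, val_ofNat_of_lt]
    omega
  · simp (disch := omega) only [apply, acrossChains, onChains, Finset.mem_union,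
      mem_blue_parallelConf, Finset.mem_image, Finset.mem_univ, true_and, Fin.exists_fin_two,
      Fin.ext_iff, pos, val_ofNat_of_lt, Fin.isValue, Fin.val_zero, Fin.val_one]
    omega

lemma run_blockMoves [NeZero n] (hn : n = 18 * T) (hr : n ≤ r) {t : ℕ} (ht : t < T) :
    Run (zipper n) r (parallelConf (9 * t - 9) (9 * t)) (blockMoves t)
      (parallelConf (9 * t) (9 * t + 9)) := by
  rcases Nat.eq_zero_or_pos t with rfl | ht₀
  · exact run_computeMoves hn hr ht
  · rw [blockMoves, if_neg ht₀.ne']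
    exact (run_ioMoves hn hr ht₀ ht).append (run_computeMoves hn hr ht)

lemma isPebbling_parallelSchedule [NeZero n] (hn : n = 18 * T) (hr : n ≤ r) :
    IsPebbling (zipper n) r (parallelSchedule n T) := by
  have hinit : init (Fin n) 2 = parallelConf (9 * 0 - 9) (9 * 0) :=
    Conf.ext (funext fun p => Finset.ext fun x => by simp [init, mem_red_parallelConf])
      (Finset.ext fun x => by simp [init, mem_blue_parallelConf])
  have hrun : Run (zipper n) r (parallelConf (9 * 0 - 9) (9 * 0)) (parallelSchedule n T)
      (parallelConf (9 * T - 9) (9 * T)) :=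
    Run.flatMap_range (S := fun t => parallelConf (9 * t - 9) (9 * t)) fun t ht => by
      rw [show 9 * (t + 1) - 9 = 9 * t by omega, show 9 * (t + 1) = 9 * t + 9 by ring]
      exact run_blockMoves hn hr ht
  refine ⟨_, hinit ▸ hrun, fun x _ =>
    Or.inr ⟨⟨side x, ?_⟩, mem_red_parallelConf.2 ⟨?_, .inl rfl⟩⟩⟩
  · simp only [side]; omega
  · have := x.isLt
    simp only [pos]
    omega

lemma cost_blockMoves [NeZero n] (t : ℕ) :
    cost 1 (blockMoves (n := n) t) = if t = 0 then 9 else 11 := by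
  unfold blockMoves
  split_ifs <;> simp [cost, moveCost, Function.comp_def]

lemma cost_parallelSchedule [NeZero n] (T : ℕ) :
    cost 1 (parallelSchedule n (T + 1)) = 11 * T + 9 := by
  induction T with
  | zero => simp [parallelSchedule, cost_blockMoves]
  | succ T ih =>
    rw [parallelSchedule, List.range_succ, List.flatMap_append, cost_append, ← parallelSchedule,
      ih, List.flatMap_singleton, cost_blockMoves, if_neg (by omega)]
    ring

end ParallelSchedule

lemma le_optIO_two {T r : ℕ} (hn : n = 18 * (T + 2)) (hr : n ≤ r) :
    5 * (T + 1) ≤ 34 * optIO (zipper n) 2 r 1 := by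
  have : NeZero n := ⟨by omega⟩
  refine optIO_of_forall_cost_le (P := fun q => 5 * (T + 1) ≤ 34 * q)
    (isPebbling_parallelSchedule hn hr) fun ms ⟨Cf, hrun, hterm⟩ hcost => ?_
  have := three_mul_le_of_terminal hn hrun hterm
  rw [cost_parallelSchedule (T + 1), cost_eq] at hcost
  omega

end Zipper

/-- There exist `g ∈ ℤ⁺` and a constant `c > 0` such that for
infinitely many `n` there is a DAG `G` on `n` nodes for which, with unbounded
fast memory (any `r ≥ n`): `OPT_IO⁽¹⁾ = 0` while `OPT_IO⁽²⁾ ≥ c·n`, where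
`OPT_IO⁽ᵏ⁾` is the minimum number of I/O moves among minimum-cost pebbling
strategies with `k` processors. -/
theorem stmt12 :
    ∃ (g : ℕ) (c : ℝ), 0 < g ∧ 0 < c ∧
      ∀ N : ℕ, ∃ n ≥ N, ∃ E : Fin n → Fin n → Prop, IsDag E ∧
        ∀ r : ℕ, n ≤ r →
          MPP.optIO E 1 r g = 0 ∧ c * n ≤ (MPP.optIO E 2 r g : ℝ) := by
  refine ⟨1, 1 / 250, one_pos, by norm_num, fun N => ⟨18 * (N + 2), by omega, zipper _,
    Zipper.isDag_zipper, fun r hr => ⟨?_, ?_⟩⟩⟩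
  · exact MPP.optIO_one_eq_zero (fun _ _ => Zipper.lt_of_zipper) hr
  · have h : (5 * (N + 1) : ℝ) ≤ 34 * MPP.optIO (zipper (18 * (N + 2))) 2 r 1 := by
      exact_mod_cast Zipper.le_optIO_two rfl hr
    push_cast
    linarith
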